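/- Let X be a topological space with basepoint x₀. Then π₁^Span(X,x₀), the fundamental group with the Spanier subgroup topology, is discrete if and only if there exists an open cover 𝒰 of X such that the Spanier subgroup π(𝒰,x₀) is trivial (i.e., if and only if X is unbased semilocally simply connected). -/

import Mathlib

/-!
For a neighbourhood family the left cosets of its members form a basis of the subgroup topology,
so `{1}` is open exactly when the family contains the trivial subgroup. Spanier subgroups form a
neighbourhood family because the common refinement of two open covers has a Spanier subgroup
contained in both.
-/

open TopologicalSpace
open scoped Topology Pointwise

attribute [local instance] Path.Homotopic.setoid

/-- The collection of all left cosets `g • H` of members of a family of subgroups. -/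
def leftCosets {G : Type*} [Group G] (Sig : Set (Subgroup G)) : Set (Set G) :=
  {s | ∃ g : G, ∃ H ∈ Sig, s = g • (H : Set G)}

/-- A neighbourhood family on a group `G`: a (nonempty) collection of subgroups such that any two
members contain a common member. -/
def IsNbhdFamily {G : Type*} [Group G] (Sig : Set (Subgroup G)) : Prop :=
  Sig.Nonempty ∧ ∀ H ∈ Sig, ∀ K ∈ Sig, ∃ S ∈ Sig, S ≤ H ⊓ K

/-- The subgroup topology on `G` determined by the family `Sig`: the topology generated by all
left cosets of members of `Sig`. -/
def subgroupTopology {G : Type*} [Group G] (Sig : Set (Subgroup G)) : TopologicalSpace G :=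
  generateFrom (leftCosets Sig)

variable {X : Type*} [TopologicalSpace X]

/-- The homotopy class of a loop, as an element of the fundamental group. -/
noncomputable def fgClass {x₀ : X} (γ : Path x₀ x₀) : FundamentalGroup X x₀ :=
  ⟦γ⟧

/-- An open cover of the space `X`. -/
def IsOpenCover (U : Set (Set X)) : Prop :=
  (∀ u ∈ U, IsOpen u) ∧ ⋃₀ U = Set.univ

/-- The Spanier subgroup `π(𝒰, x₀)` of the fundamental group determined by an open cover `𝒰`:
the subgroup generated by all classes `[α * β * α⁻¹]` with `α` a path starting at `x₀` and `β`
a loop at `α(1)` lying in some member of `𝒰`. -/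
noncomputable def spanierSubgroup (U : Set (Set X)) (x₀ : X) :
    Subgroup (FundamentalGroup X x₀) :=
  Subgroup.closure
    {g | ∃ (x : X) (α : Path x₀ x) (β : Path x x) (u : Set X), u ∈ U ∧ Set.range β ⊆ u ∧
      g = fgClass ((α.trans β).trans α.symm)}

/-- The collection of all Spanier subgroups of `π₁(X, x₀)`. -/
def spanierFamily (x₀ : X) : Set (Subgroup (FundamentalGroup X x₀)) :=
  {H | ∃ U : Set (Set X), IsOpenCover U ∧ H = spanierSubgroup U x₀}

/-- A path open cover of `(X, x₀)`: a family of open sets `V x α`, indexed by the paths `α` in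
`X` from `x₀` to `x`, with `α(1) ∈ V x α`. -/
def IsPathOpenCover (x₀ : X) (V : (x : X) → Path x₀ x → Set X) : Prop :=
  ∀ (x : X) (α : Path x₀ x), IsOpen (V x α) ∧ α 1 ∈ V x α

/-- The path Spanier subgroup `π̃(𝒱, x₀)` determined by a path open cover `𝒱`: the subgroup
generated by all classes `[α * β * α⁻¹]` with `α` a path starting at `x₀` and `β` a loop at
`α(1)` lying in `V_α`. -/
noncomputable def pathSpanierSubgroup (x₀ : X) (V : (x : X) → Path x₀ x → Set X) :
    Subgroup (FundamentalGroup X x₀) :=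
  Subgroup.closure
    {g | ∃ (x : X) (α : Path x₀ x) (β : Path x x), Set.range β ⊆ V x α ∧
      g = fgClass ((α.trans β).trans α.symm)}

/-- The collection of all path Spanier subgroups of `π₁(X, x₀)`. -/
def pathSpanierFamily (x₀ : X) : Set (Subgroup (FundamentalGroup X x₀)) :=
  {H | ∃ V : (x : X) → Path x₀ x → Set X, IsPathOpenCover x₀ V ∧ H = pathSpanierSubgroup x₀ V}

section SubgroupTopology

variable {G : Type*} [Group G] {Sig : Set (Subgroup G)}

lemma leftCoset_eq_of_mem {H : Subgroup G} {g x : G} (hx : x ∈ g • (H : Set G)) :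
    x • (H : Set G) = g • H :=
  (leftCoset_eq_iff H).2 (by simpa using H.inv_mem ((mem_leftCoset_iff g).1 hx))

lemma isTopologicalBasis_leftCosets (hSig : IsNbhdFamily Sig) :
    @IsTopologicalBasis G (subgroupTopology Sig) (leftCosets Sig) := by
  refine @IsTopologicalBasis.mk _ (subgroupTopology Sig) _ ?_ ?_ rfl
  · rintro _ ⟨g, H, hH, rfl⟩ _ ⟨g', K, hK, rfl⟩ x ⟨hxH, hxK⟩
    obtain ⟨S, hS, hSHK⟩ := hSig.2 H hH K hK
    refine ⟨x • (S : Set G), ⟨x, S, hS, rfl⟩, mem_own_leftCoset S.toSubmonoid x, ?_⟩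
    rw [← leftCoset_eq_of_mem hxH, ← leftCoset_eq_of_mem hxK]
    exact Set.subset_inter (Set.smul_set_mono fun y hy => (hSHK hy).1)
      (Set.smul_set_mono fun y hy => (hSHK hy).2)
  · obtain ⟨H, hH⟩ := hSig.1
    exact Set.eq_univ_of_forall fun g =>
      ⟨g • (H : Set G), ⟨g, H, hH, rfl⟩, mem_own_leftCoset H.toSubmonoid g⟩

theorem subgroupTopology_eq_bot_iff (hSig : IsNbhdFamily Sig) :
    subgroupTopology Sig = ⊥ ↔ ⊥ ∈ Sig := by
  constructor
  · intro hdisc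
    have hopen : IsOpen[subgroupTopology Sig] ({1} : Set G) := by
      rw [hdisc]; exact @isOpen_discrete G ⊥ (discreteTopology_bot G) _
    obtain ⟨_, ⟨g, H, hH, rfl⟩, h1, hsub⟩ :=
      (@IsTopologicalBasis.isOpen_iff _ (subgroupTopology Sig) _ _
        (isTopologicalBasis_leftCosets hSig)).1 hopen 1 rfl
    rw [← leftCoset_eq_of_mem h1, one_smul] at hsub
    rwa [(Subgroup.eq_bot_iff_forall H).2 fun x hx => hsub hx] at hH
  · intro hbot
    refine eq_bot_of_singletons_open fun g => GenerateOpen.basic _ ⟨g, ⊥, hbot, ?_⟩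
    simp

end SubgroupTopology

lemma spanierSubgroup_mono {U W : Set (Set X)} (x₀ : X) (hWU : ∀ w ∈ W, ∃ u ∈ U, w ⊆ u) :
    spanierSubgroup W x₀ ≤ spanierSubgroup U x₀ := by
  apply Subgroup.closure_mono
  rintro g ⟨x, α, β, w, hwW, hβ, rfl⟩
  obtain ⟨u, huU, hwu⟩ := hWU w hwW
  exact ⟨x, α, β, u, huU, hβ.trans hwu, rfl⟩

lemma isOpenCover_singleton_univ : IsOpenCover ({Set.univ} : Set (Set X)) :=
  ⟨fun _ hu => hu ▸ isOpen_univ, Set.sUnion_singleton _⟩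

lemma IsOpenCover.image2_inter {U U' : Set (Set X)} (hU : IsOpenCover U)
    (hU' : IsOpenCover U') : IsOpenCover (Set.image2 (· ∩ ·) U U') := by
  refine ⟨?_, Set.eq_univ_of_forall fun x => ?_⟩
  · rintro _ ⟨u, hu, v, hv, rfl⟩
    exact (hU.1 u hu).inter (hU'.1 v hv)
  · obtain ⟨u, hu, hxu⟩ := hU.2.symm ▸ Set.mem_univ x
    obtain ⟨v, hv, hxv⟩ := hU'.2.symm ▸ Set.mem_univ x
    exact ⟨u ∩ v, Set.mem_image2_of_mem hu hv, hxu, hxv⟩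

lemma isNbhdFamily_spanierFamily (x₀ : X) : IsNbhdFamily (spanierFamily x₀) := by
  refine ⟨⟨_, _, isOpenCover_singleton_univ, rfl⟩, ?_⟩
  rintro _ ⟨U, hU, rfl⟩ _ ⟨U', hU', rfl⟩
  refine ⟨_, ⟨_, hU.image2_inter hU', rfl⟩, le_inf ?_ ?_⟩ <;>
    refine spanierSubgroup_mono x₀ ?_ <;> rintro _ ⟨u, hu, v, hv, rfl⟩
  exacts [⟨u, hu, Set.inter_subset_left⟩, ⟨v, hv, Set.inter_subset_right⟩]

/-- the Spanier subgroup topology on `π₁(X, x₀)` is discrete iff there is an open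
cover of `X` with trivial Spanier subgroup (i.e. iff `X` is unbased semilocally simply
connected). -/
theorem statement13 (x₀ : X) :
    subgroupTopology (spanierFamily x₀) = ⊥ ↔
      ∃ U : Set (Set X), IsOpenCover U ∧ spanierSubgroup U x₀ = ⊥ := by
  rw [subgroupTopology_eq_bot_iff (isNbhdFamily_spanierFamily x₀)]
  exact exists_congr fun _ => and_congr_right' eq_comm
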